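/- Let X be a real normed (or locally convex) space and f₁, …, f_n : X → ℝ ∪ {±∞} be convex and lower semicontinuous functions such that f := max_{1≤k≤n} f_k has nonempty effective domain. Then inf_{x∈X} f(x) = max_{λ∈Δ_n} inf_{x∈X} Σ_{k=1}^n λ_k f_k(x), where the convention 0·(−∞) = 0 and 0·(+∞) = +∞ is used, Δ_n is the standard n-simplex, and the maximum is attained. -/

import Mathlib

open Filter Topology

def IsConvexEFn {E : Type*} [AddCommGroup E] [Module ℝ E] (g : E → EReal) : Prop :=
  Convex ℝ {p : E × ℝ | g p.1 ≤ (p.2 : EReal)}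

/-- Scalar multiplication with the conventions `0·(+∞) = +∞` and `0·(−∞) = 0`. -/
noncomputable def smul0 (a : ℝ) (v : EReal) : EReal :=
  if a = 0 then (if v = ⊤ then ⊤ else 0) else (a : EReal) * v

/-!
Weak duality holds termwise. For the reverse inequality, when `μ = inf_x max_k f_k x` is a real
number, the vectors `y ∈ ℝⁿ` lying strictly above `(f_k x)_k` for some `x` form an open convex upper
set missing `(μ, …, μ)`. A Hahn–Banach functional separating them is a nonnegative vector, which
normalised is the multiplier `λ`. An improper `f_k` is `−∞` on all of `dom f` (convexity plus lower
semicontinuity), so that set is unbounded below in the `k`-th coordinate, which forces `λ_k = 0`: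
the weighted sum never meets `−∞`, and it dominates `μ` off `dom f` because there it is `+∞`.
-/

namespace IsConvexEFn

variable {E : Type*} [AddCommGroup E] [Module ℝ E] {f : E → EReal}

lemma apply_combo_le (hf : IsConvexEFn f) {x y : E} {a b s t : ℝ} (hx : f x ≤ a) (hy : f y ≤ b)
    (hs : 0 ≤ s) (ht : 0 ≤ t) (hst : s + t = 1) : f (s • x + t • y) ≤ ↑(s * a + t * b) := by
  simpa using hf (x := (x, a)) (y := (y, b)) hx hy hs ht hst

lemma combo_eq_bot (hf : IsConvexEFn f) {z x : E} {s t : ℝ} (hz : f z = ⊥) (hx : f x ≠ ⊤)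
    (hs : 0 < s) (ht : 0 ≤ t) (hst : s + t = 1) : f (s • z + t • x) = ⊥ := by
  refine (EReal.eq_bot_iff_forall_lt _).2 fun u => ?_
  set g := (f x).toReal
  have hcombo : s * ((u - 1 - t * g) / s) + t * g = u - 1 := by field_simp; ring
  calc f (s • z + t • x) ≤ ↑(s * ((u - 1 - t * g) / s) + t * g) :=
        hf.apply_combo_le (by simp [hz]) (EReal.le_coe_toReal hx) hs.le ht hst
    _ < u := by rw [hcombo]; exact_mod_cast sub_one_lt u

end IsConvexEFn

lemma LowerSemicontinuousAt.eq_bot_of_frequently_eq_bot {α β : Type*} [TopologicalSpace α]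
    [PartialOrder β] [OrderBot β] {f : α → β} {x : α} (hf : LowerSemicontinuousAt f x)
    (h : ∃ᶠ y in 𝓝 x, f y = ⊥) : f x = ⊥ := by
  by_contra hx
  obtain ⟨y, hy, hy'⟩ := (h.and_eventually (hf ⊥ (bot_lt_iff_ne_bot.2 hx))).exists
  exact hy'.ne' hy

lemma IsConvexEFn.eq_bot_of_ne_top {E : Type*} [TopologicalSpace E] [AddCommGroup E] [Module ℝ E]
    [IsTopologicalAddGroup E] [ContinuousSMul ℝ E] {f : E → EReal} (hf : IsConvexEFn f)
    (hlsc : LowerSemicontinuous f) {z x : E} (hz : f z = ⊥) (hx : f x ≠ ⊤) : f x = ⊥ := by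
  have hseg : Tendsto (fun s : ℝ => s • z + (1 - s) • x) (𝓝[>] 0) (𝓝 x) := by
    have : Continuous fun s : ℝ => s • z + (1 - s) • x := by fun_prop
    simpa using (this.tendsto 0).mono_left nhdsWithin_le_nhds
  have hbot : ∀ᶠ s in 𝓝[>] (0 : ℝ), f (s • z + (1 - s) • x) = ⊥ := by
    filter_upwards [Ioc_mem_nhdsGT zero_lt_one] with s hs
    exact hf.combo_eq_bot hz hx hs.1 (sub_nonneg.2 hs.2) (add_sub_cancel _ _)
  exact (hlsc.lowerSemicontinuousAt x).eq_bot_of_frequently_eq_bot (hseg.frequently hbot.frequently)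

section smul0

variable {a : ℝ} {v : EReal}

lemma smul0_le_coe_mul (ha : 0 ≤ a) {c : ℝ} (hv : v ≤ c) : smul0 a v ≤ ↑(a * c) := by
  rcases ha.eq_or_lt with rfl | ha
  · simp [smul0, (hv.trans_lt (EReal.coe_lt_top c)).ne]
  · rw [smul0, if_neg ha.ne', EReal.coe_mul]
    exact mul_le_mul_of_nonneg_left hv (by exact_mod_cast ha.le)

lemma smul0_top (ha : 0 ≤ a) : smul0 a ⊤ = ⊤ := by
  rcases ha.eq_or_lt with rfl | ha
  · simp [smul0]
  · rw [smul0, if_neg ha.ne', EReal.coe_mul_top_of_pos ha]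

lemma smul0_ne_bot (ha : 0 ≤ a) (hv : a ≠ 0 → v ≠ ⊥) : smul0 a v ≠ ⊥ := by
  rcases ha.eq_or_lt with rfl | ha
  · unfold smul0; split_ifs <;> simp
  · induction v using EReal.rec with
    | bot => exact absurd rfl (hv ha.ne')
    | top => simp [smul0_top ha.le]
    | coe w => simp [smul0, ha.ne', ← EReal.coe_mul]

lemma smul0_eq_coe_mul_toReal (hv : v ≠ ⊤) (hva : a ≠ 0 → v ≠ ⊥) :
    smul0 a v = ↑(a * v.toReal) := by
  by_cases ha : a = 0
  · simp [smul0, ha, hv]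
  · rw [smul0, if_neg ha, EReal.coe_mul, EReal.coe_toReal hv (hva ha)]

end smul0

lemma EReal.coe_finset_sum {ι : Type*} (s : Finset ι) (g : ι → ℝ) :
    ((∑ i ∈ s, g i : ℝ) : EReal) = ∑ i ∈ s, (g i : EReal) :=
  map_sum (⟨⟨(↑), EReal.coe_zero⟩, EReal.coe_add⟩ : ℝ →+ EReal) g s

lemma sum_smul0_le_iSup {ι : Type*} [Fintype ι] {w : ι → ℝ} (hw : w ∈ stdSimplex ℝ ι)
    (v : ι → EReal) : ∑ k, smul0 (w k) (v k) ≤ ⨆ k, v k := by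
  refine le_of_forall_gt_imp_ge_of_dense fun c hc => ?_
  induction c using EReal.rec with
  | bot => exact absurd hc not_lt_bot
  | top => exact le_top
  | coe c =>
    calc ∑ k, smul0 (w k) (v k) ≤ ∑ k, ((w k * c : ℝ) : EReal) :=
          Finset.sum_le_sum fun k _ =>
            smul0_le_coe_mul (hw.1 k) ((le_iSup v k).trans hc.le)
      _ = c := by rw [← EReal.coe_finset_sum, ← Finset.sum_mul, hw.2, one_mul]

lemma coe_le_sum_smul0 {ι : Type*} [Fintype ι] {w : ι → ℝ} (hw : ∀ k, 0 ≤ w k) {v : ι → EReal}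
    {r : ℝ} (hbot : ∀ k, w k ≠ 0 → v k ≠ ⊥) (hfin : (∀ k, v k ≠ ⊤) → r ≤ ∑ k, w k * (v k).toReal) :
    (r : EReal) ≤ ∑ k, smul0 (w k) (v k) := by
  by_cases htop : ∀ k, v k ≠ ⊤
  · rw [Finset.sum_congr rfl fun k _ => smul0_eq_coe_mul_toReal (htop k) (hbot k),
      ← EReal.coe_finset_sum]
    exact_mod_cast hfin htop
  · obtain ⟨j, hj⟩ : ∃ j, v j = ⊤ := by simpa using htop
    classical
    rw [← Finset.add_sum_erase _ _ (Finset.mem_univ j), hj, smul0_top (hw j),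
      EReal.top_add_of_ne_bot]
    · exact le_top
    · exact Finset.sum_induction _ (· ≠ ⊥) (fun _ _ ha hb => EReal.add_ne_bot_iff.2 ⟨ha, hb⟩)
        EReal.zero_ne_bot fun k _ => smul0_ne_bot (hw k) (hbot k)

lemma LinearMap.nonneg_of_forall_add_smul_mem {E : Type*} [AddCommGroup E] [Module ℝ E]
    (φ : E →ₗ[ℝ] ℝ) {S : Set E} {p y v : E} (hsep : ∀ z ∈ S, φ p < φ z)
    (hv : ∀ t : ℝ, 0 ≤ t → y + t • v ∈ S) : 0 ≤ φ v := by
  by_contra! hneg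
  have hpy : φ p < φ y := hsep y (by simpa using hv 0 le_rfl)
  have := hsep _ (hv ((φ y - φ p) / -φ v) (div_nonneg (sub_nonneg.2 hpy.le) (neg_nonneg.2 hneg.le)))
  rw [map_add, map_smul, smul_eq_mul, div_mul_eq_mul_div, div_neg,
    mul_div_cancel_right₀ _ hneg.ne] at this
  linarith

lemma exists_mem_stdSimplex_dotProduct_lt {ι : Type*} [Fintype ι] {S : Set (ι → ℝ)}
    (hSo : IsOpen S) (hSc : Convex ℝ S) (hSu : IsUpperSet S) {p y₀ : ι → ℝ} (hy₀ : y₀ ∈ S)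
    (hp : p ∉ S) :
    ∃ w ∈ stdSimplex ℝ ι, (∀ y ∈ S, w ⬝ᵥ p < w ⬝ᵥ y) ∧
      ∀ v, (∀ y ∈ S, ∀ t : ℝ, 0 ≤ t → y + t • v ∈ S) → 0 ≤ w ⬝ᵥ v := by
  classical
  obtain ⟨φ, hφ⟩ := geometric_hahn_banach_point_open hSc hSo hp
  set c : ι → ℝ := fun k => φ fun j => if k = j then 1 else 0
  have hφc : ∀ y, φ y = c ⬝ᵥ y := fun y => by
    rw [dotProduct_comm, ← φ.coe_coe, LinearMap.pi_apply_eq_sum_univ]; rfl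
  have hrec : ∀ v, (∀ t : ℝ, 0 ≤ t → y₀ + t • v ∈ S) → 0 ≤ c ⬝ᵥ v := fun v hv => by
    rw [← hφc]; exact φ.toLinearMap.nonneg_of_forall_add_smul_mem hφ hv
  have hc : ∀ k, 0 ≤ c k := fun k => by
    simpa using hrec (Pi.single k 1) fun t ht =>
      hSu (le_add_of_nonneg_right (smul_nonneg ht (Pi.single_nonneg.2 zero_le_one))) hy₀
  have hcpos : 0 < ∑ k, c k := by
    refine (Finset.sum_nonneg fun k _ => hc k).lt_of_ne fun hsum => ?_
    have hc0 : c = 0 := funext fun k =>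
      (Finset.sum_eq_zero_iff_of_nonneg fun k _ => hc k).1 hsum.symm k (Finset.mem_univ k)
    simpa [hφc, hc0] using hφ y₀ hy₀
  refine ⟨(∑ k, c k)⁻¹ • c, ⟨fun k => mul_nonneg (inv_nonneg.2 hcpos.le) (hc k), ?_⟩,
    fun y hy => ?_, fun v hv => ?_⟩
  · simp only [Pi.smul_apply, smul_eq_mul, ← Finset.mul_sum]
    exact inv_mul_cancel₀ hcpos.ne'
  · simpa only [smul_dotProduct, smul_eq_mul, ← hφc] using
      mul_lt_mul_of_pos_left (hφ y hy) (inv_pos.2 hcpos)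
  · rw [smul_dotProduct, smul_eq_mul]
    exact mul_nonneg (inv_nonneg.2 hcpos.le) (hrec v (hv y₀ hy₀))

def strictEpiImage {X ι : Type*} (f : ι → X → EReal) : Set (ι → ℝ) :=
  {y | ∃ x, ∀ k, f k x < y k}

section strictEpiImage

variable {X ι : Type*} {f : ι → X → EReal}

lemma isOpen_strictEpiImage [Finite ι] : IsOpen (strictEpiImage f) := by
  simp only [strictEpiImage, Set.ofPred_exists, Set.ofPred_forall]
  exact isOpen_iUnion fun x => isOpen_iInter_of_finite fun k =>
    isOpen_lt continuous_const (continuous_coe_real_ereal.comp (continuous_apply k))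

lemma isUpperSet_strictEpiImage : IsUpperSet (strictEpiImage f) :=
  fun _ _ hy ⟨x, hx⟩ => ⟨x, fun k => (hx k).trans_le (EReal.coe_le_coe_iff.2 (hy k))⟩

lemma convex_strictEpiImage [AddCommGroup X] [Module ℝ X] (hf : ∀ k, IsConvexEFn (f k)) :
    Convex ℝ (strictEpiImage f) := by
  refine convex_iff_forall_pos.2 fun y₁ ⟨x₁, h₁⟩ y₂ ⟨x₂, h₂⟩ a b ha hb hab =>
    ⟨a • x₁ + b • x₂, fun k => ?_⟩
  obtain ⟨t₁, ht₁, ht₁'⟩ := EReal.exists_between_coe_real (h₁ k)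
  obtain ⟨t₂, ht₂, ht₂'⟩ := EReal.exists_between_coe_real (h₂ k)
  have hlt : a * t₁ + b * t₂ < a * y₁ k + b * y₂ k :=
    add_lt_add (mul_lt_mul_of_pos_left (EReal.coe_lt_coe_iff.1 ht₁') ha)
      (mul_lt_mul_of_pos_left (EReal.coe_lt_coe_iff.1 ht₂') hb)
  calc f k (a • x₁ + b • x₂) ≤ ↑(a * t₁ + b * t₂) :=
        (hf k).apply_combo_le ht₁.le ht₂.le ha.le hb.le hab
    _ < _ := by exact_mod_cast hlt

end strictEpiImage

lemma exists_mem_stdSimplex_coe_le_sum_smul0 {X ι : Type*} [TopologicalSpace X] [AddCommGroup X]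
    [Module ℝ X] [IsTopologicalAddGroup X] [ContinuousSMul ℝ X] [Fintype ι]
    {f : ι → X → EReal} (hlsc : ∀ k, LowerSemicontinuous (f k)) (hconv : ∀ k, IsConvexEFn (f k))
    {x₀ : X} (hx₀ : ∀ k, f k x₀ ≠ ⊤) {r : ℝ} (hr : ∀ x, (r : EReal) ≤ ⨆ k, f k x) :
    ∃ w ∈ stdSimplex ℝ ι, ∀ x, (r : EReal) ≤ ∑ k, smul0 (w k) (f k x) := by
  classical
  have hp : (fun _ => r) ∉ strictEpiImage f := fun ⟨x, hx⟩ => (hr x).not_gt <| by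
    rw [← Finset.sup_univ_eq_iSup]
    exact (Finset.sup_lt_iff (EReal.bot_lt_coe r)).2 fun k _ => hx k
  have hy₀ : (fun k => (f k x₀).toReal + 1) ∈ strictEpiImage f :=
    ⟨x₀, fun k => (EReal.le_coe_toReal (hx₀ k)).trans_lt (by exact_mod_cast lt_add_one _)⟩
  obtain ⟨w, hw, hsep, hrec⟩ := exists_mem_stdSimplex_dotProduct_lt isOpen_strictEpiImage
    (convex_strictEpiImage hconv) isUpperSet_strictEpiImage hy₀ hp
  -- An improper `f k` is `⊥` wherever all `f j` are finite, so lowering `y k` stays in the set.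
  have hw_bot : ∀ k, w k ≠ 0 → ∀ x, f k x ≠ ⊥ := by
    intro k hk z hz
    refine hk (le_antisymm ?_ (hw.1 k))
    have hdir := hrec (-Pi.single k 1) fun y ⟨x, hx⟩ t _ => ⟨x, fun j => ?_⟩
    · simpa using hdir
    rcases eq_or_ne j k with rfl | hjk
    · rw [(hconv j).eq_bot_of_ne_top (hlsc j) hz (hx j).ne_top]
      exact EReal.bot_lt_coe _
    · simpa [Pi.single_apply, hjk] using hx j
  refine ⟨w, hw, fun x => coe_le_sum_smul0 hw.1 (fun k hk => hw_bot k hk x) fun hfin => ?_⟩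
  refine le_of_forall_pos_lt_add fun δ hδ => ?_
  have hmem : (fun k => (f k x).toReal + δ) ∈ strictEpiImage f := ⟨x, fun k =>
    (EReal.le_coe_toReal (hfin k)).trans_lt (by exact_mod_cast lt_add_of_pos_right _ hδ)⟩
  simpa [dotProduct, mul_add, Finset.sum_add_distrib, ← Finset.sum_mul, hw.2] using hsep _ hmem

/-- Lagrangian duality for a finite max of convex lsc functions,
as in statement 7, but for possibly improper convex lsc functions. -/
theorem stmt8 {X : Type*} [NormedAddCommGroup X] [NormedSpace ℝ X]
    (n : ℕ) (hn : 0 < n) (f : Fin n → X → EReal)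
    (hlsc : ∀ k, LowerSemicontinuous (f k))
    (hconv : ∀ k, IsConvexEFn (f k))
    (hdom : ∃ x, (⨆ k, f k x) ≠ ⊤) :
    ∃ l : Fin n → ℝ, (∀ k, 0 ≤ l k) ∧ (∑ k, l k = 1) ∧
      (⨅ x, ∑ k, smul0 (l k) (f k x)) = (⨅ x, ⨆ k, f k x) ∧
      ∀ m : Fin n → ℝ, (∀ k, 0 ≤ m k) → (∑ k, m k = 1) →
        (⨅ x, ∑ k, smul0 (m k) (f k x)) ≤ ⨅ x, ⨆ k, f k x := by
  have weak : ∀ m : Fin n → ℝ, (∀ k, 0 ≤ m k) → (∑ k, m k = 1) →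
      (⨅ x, ∑ k, smul0 (m k) (f k x)) ≤ ⨅ x, ⨆ k, f k x :=
    fun m hm0 hm1 => iInf_mono fun x => sum_smul0_le_iSup ⟨hm0, hm1⟩ _
  obtain ⟨l, ⟨hl0, hl1⟩, hl⟩ : ∃ l ∈ stdSimplex ℝ (Fin n),
      ∀ x, (⨅ x, ⨆ k, f k x) ≤ ∑ k, smul0 (l k) (f k x) := by
    obtain ⟨x₀, hx₀⟩ := hdom
    induction hμ : ⨅ x, ⨆ k, f k x using EReal.rec with
    | bot => exact ⟨_, ite_eq_mem_stdSimplex ℝ ⟨0, hn⟩, fun _ => bot_le⟩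
    | top => exact absurd (top_unique (hμ ▸ iInf_le _ x₀)) hx₀
    | coe r =>
      exact exists_mem_stdSimplex_coe_le_sum_smul0 hlsc hconv
        (fun k => ne_top_of_le_ne_top hx₀ (le_iSup (f · x₀) k)) fun x => hμ ▸ iInf_le _ x
  exact ⟨l, hl0, hl1, (weak l hl0 hl1).antisymm (le_iInf hl), weak⟩
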